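/- arXiv:0812.0435 — 5 statements merged into one kernel-verified Lean document; each statement's English description precedes it below -/
import Mathlib

section
/- Let T be a semistandard skew tableau of shape λ/μ with entry function f. For integers m and p ≥ 1 let α_{p,m} be the number of boxes (i,j) of λ/μ with f(i,j) = p and i ≤ p + m − 1. Then T is a Littlewood–Richardson tableau if and only if for every integer m the sequence α_{1,m} ≥ α_{2,m} ≥ α_{3,m} ≥ … is weakly decreasing. -/
/-- A partition, written as a weakly decreasing function on indices `1, 2, …`. -/
def IsPartition (f : ℕ → ℕ) : Prop := f 0 = 0 ∧ ∀ p, 1 ≤ p → f (p + 1) ≤ f p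

/-- The Young diagram of `f`: boxes `(i, j)` with `1 ≤ j ≤ f i`. -/
def YD (f : ℕ → ℕ) : Set (ℕ × ℕ) := {b | 1 ≤ b.2 ∧ b.2 ≤ f b.1}

/-- The skew Young diagram `lam / mu`: boxes of `lam` not in `mu`. -/
def SkewS (lam mu : ℕ → ℕ) : Set (ℕ × ℕ) := YD lam \ YD mu

/-- `f` is a semistandard filling of the shape `S`: entries are positive, rows weakly
increase left to right, columns strictly increase top to bottom. -/
def SSYTs (S : Set (ℕ × ℕ)) (f : ℕ × ℕ → ℕ) : Prop :=
  (∀ b ∈ S, 1 ≤ f b) ∧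
  (∀ i j j', (i, j) ∈ S → (i, j') ∈ S → j ≤ j' → f (i, j) ≤ f (i, j')) ∧
  (∀ i i' j, (i, j) ∈ S → (i', j) ∈ S → i < i' → f (i, j) < f (i', j))

/-- The reverse reading word of the filling `f` of `S` (rows top to bottom, each row right
to left) is a ballot sequence: in the prefix ending at any box `b`, there are at least as
many occurrences of `p` as of `p + 1`, for every `p ≥ 1`. -/
def BallotS (S : Set (ℕ × ℕ)) (f : ℕ × ℕ → ℕ) : Prop :=
  ∀ p, 1 ≤ p → ∀ b ∈ S,
    Set.ncard {c ∈ S | (c.1 < b.1 ∨ (c.1 = b.1 ∧ b.2 ≤ c.2)) ∧ f c = p + 1} ≤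
      Set.ncard {c ∈ S | (c.1 < b.1 ∨ (c.1 = b.1 ∧ b.2 ≤ c.2)) ∧ f c = p}

lemma skew_finite (lam mu : ℕ → ℕ) (hlam : IsPartition lam)
    (hfin : ∃ N, ∀ p, N ≤ p → lam p = 0) : (SkewS lam mu).Finite := by
  obtain ⟨N, hN⟩ := hfin
  have hmono : ∀ i, 1 ≤ i → lam i ≤ lam 1 := by
    intro i hi
    induction i, hi using Nat.le_induction with
    | base => exact le_rfl
    | succ n hn ih => exact le_trans (hlam.2 n hn) ih
  apply Set.Finite.subset ((Set.finite_Iic N).prod (Set.finite_Iic (lam 1)))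
  rintro ⟨i, j⟩ ⟨⟨h1, h2⟩, -⟩
  simp only [Set.mem_prod, Set.mem_Iic]
  constructor
  · by_contra h
    push_neg at h
    have := hN i (by omega)
    simp only [YD] at h2 h1
    omega
  · rcases Nat.eq_zero_or_pos i with h | h
    · subst h; rw [hlam.1] at h2; omega
    · exact le_trans h2 (hmono i h)


/-- A semistandard skew tableau `f` of shape `lam/mu` is a
Littlewood–Richardson tableau if and only if for every integer `m` the sequence
`α_{1,m}, α_{2,m}, …` is weakly decreasing, where `α_{p,m}` is the number of boxes with
entry `p` lying in rows `≤ p + m - 1`. -/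
theorem statement2 (lam mu : ℕ → ℕ)
    (hlam : IsPartition lam) (hmu : IsPartition mu) (hsub : ∀ p, mu p ≤ lam p)
    (hfin : ∃ N, ∀ p, N ≤ p → lam p = 0)
    (f : ℕ × ℕ → ℕ) (hf : SSYTs (SkewS lam mu) f) :
    BallotS (SkewS lam mu) f ↔
      ∀ (m : ℤ) (p : ℕ), 1 ≤ p →
        Set.ncard {b ∈ SkewS lam mu | f b = p + 1 ∧ (b.1 : ℤ) ≤ ((p : ℤ) + 1) + m - 1} ≤
          Set.ncard {b ∈ SkewS lam mu | f b = p ∧ (b.1 : ℤ) ≤ (p : ℤ) + m - 1} := by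
  obtain ⟨hpos, hrow, hcol⟩ := hf
  have hSfin : (SkewS lam mu).Finite := skew_finite lam mu hlam hfin
  set S := SkewS lam mu with hS
  constructor
  · -- Ballot → inequalities
    intro hb m p hp
    set A : Set (ℕ × ℕ) := {b ∈ S | f b = p + 1 ∧ (b.1 : ℤ) ≤ ((p : ℤ) + 1) + m - 1} with hA
    rcases A.eq_empty_or_nonempty with hAe | hAne
    · rw [hAe]; simp
    have hAfin : A.Finite := hSfin.subset (fun x hx => hx.1)
    -- pick a box with maximal row
    obtain ⟨r, hrA, hrmax⟩ := Set.exists_max_image A (fun c => c.1) hAfin hAne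
    -- among boxes of A in row r.1, pick minimal column
    set B : Set (ℕ × ℕ) := {c ∈ A | c.1 = r.1} with hB
    have hBfin : B.Finite := hAfin.subset (fun x hx => hx.1)
    obtain ⟨b, hbB, hbmin⟩ := Set.exists_min_image B (fun c => c.2) hBfin ⟨r, hrA, rfl⟩
    have hbA : b ∈ A := hbB.1
    have hbS : b ∈ S := hbA.1
    have hbrow : b.1 = r.1 := hbB.2
    -- inclusion 1 : A ⊆ prefix(b, p+1)
    have incl1 : A ⊆ {c ∈ S | (c.1 < b.1 ∨ (c.1 = b.1 ∧ b.2 ≤ c.2)) ∧ f c = p + 1} := by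
      rintro c hc
      refine ⟨hc.1, ?_, hc.2.1⟩
      rcases lt_trichotomy c.1 b.1 with h | h | h
      · exact Or.inl h
      · exact Or.inr ⟨h, hbmin c ⟨hc, by omega⟩⟩
      · exact absurd (hrmax c hc) (by omega)
    -- inclusion 2 : prefix(b, p) ⊆ target
    have incl2 : {c ∈ S | (c.1 < b.1 ∨ (c.1 = b.1 ∧ b.2 ≤ c.2)) ∧ f c = p} ⊆
        {c ∈ S | f c = p ∧ (c.1 : ℤ) ≤ (p : ℤ) + m - 1} := by
      rintro ⟨c1, c2⟩ ⟨hcS, hpos', hfc⟩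
      refine ⟨hcS, hfc, ?_⟩
      rcases hpos' with h | ⟨h1, h2⟩
      · have hb1 : (b.1 : ℤ) ≤ ((p : ℤ) + 1) + m - 1 := hbA.2.2
        simp only at h ⊢
        omega
      · -- same row: f c ≥ f b = p + 1, contradiction
        exfalso
        simp only at h1 h2
        subst h1
        have hb' : (b.1, b.2) ∈ S := by rw [Prod.mk.eta]; exact hbS
        have := hrow b.1 b.2 c2 hb' hcS h2
        rw [hfc] at this
        have : p + 1 ≤ p := by
          calc p + 1 = f b := hbA.2.1.symm
          _ = f (b.1, b.2) := by rw [Prod.mk.eta]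
          _ ≤ p := this
        omega
    calc A.ncard ≤ Set.ncard {c ∈ S | (c.1 < b.1 ∨ (c.1 = b.1 ∧ b.2 ≤ c.2)) ∧ f c = p + 1} :=
          Set.ncard_le_ncard incl1 (hSfin.subset (fun x hx => hx.1))
      _ ≤ Set.ncard {c ∈ S | (c.1 < b.1 ∨ (c.1 = b.1 ∧ b.2 ≤ c.2)) ∧ f c = p} := hb p hp b hbS
      _ ≤ _ := Set.ncard_le_ncard incl2 (hSfin.subset (fun x hx => hx.1))
  · -- inequalities → Ballot
    intro h p hp b hbS
    have key := h ((b.1 : ℤ) - p) p hp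
    have incl1 : {c ∈ S | (c.1 < b.1 ∨ (c.1 = b.1 ∧ b.2 ≤ c.2)) ∧ f c = p + 1} ⊆
        {c ∈ S | f c = p + 1 ∧ (c.1 : ℤ) ≤ ((p : ℤ) + 1) + ((b.1 : ℤ) - p) - 1} := by
      rintro c ⟨hcS, hpos', hfc⟩
      refine ⟨hcS, hfc, ?_⟩
      rcases hpos' with h' | ⟨h', -⟩ <;> omega
    have incl2 : {c ∈ S | f c = p ∧ (c.1 : ℤ) ≤ (p : ℤ) + ((b.1 : ℤ) - p) - 1} ⊆
        {c ∈ S | (c.1 < b.1 ∨ (c.1 = b.1 ∧ b.2 ≤ c.2)) ∧ f c = p} := by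
      rintro c ⟨hcS, hfc, hle⟩
      exact ⟨hcS, Or.inl (by omega), hfc⟩
    calc Set.ncard {c ∈ S | (c.1 < b.1 ∨ (c.1 = b.1 ∧ b.2 ≤ c.2)) ∧ f c = p + 1}
        ≤ _ := Set.ncard_le_ncard incl1 (hSfin.subset (fun x hx => hx.1))
      _ ≤ _ := key
      _ ≤ _ := Set.ncard_le_ncard incl2 (hSfin.subset (fun x hx => hx.1))
end

section
/- Let D be a row convex diagram and i ≥ 2 an index with l_{i−1} > l_i such that Step A is permitted at row i (that is, r_i ≥ l_{i−1} − 1 or row i−1 of D is empty). Then the diagram D^A obtained by performing Step A at row i is row convex. -/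
open scoped ENat

/-- A diagram: a finite set of boxes `(i, j)` (row `i` from the top, column `j` from the left). -/
abbrev Dg := Finset (ℕ × ℕ)

/-- The set of column indices of boxes in row `i` of `D`. -/
def row (D : Dg) (i : ℕ) : Finset ℕ := (D.filter (fun b => b.1 = i)).image Prod.snd

/-- `l_i`: the least column index in row `i`, with the convention `l_i = ∞` for an empty row. -/
noncomputable def lRow (D : Dg) (i : ℕ) : ℕ∞ := (row D i).inf (fun j => (j : ℕ∞))

/-- `r_i`: the greatest column index in row `i`, with the convention `r_i = 0` for an empty row. -/
def rRow (D : Dg) (i : ℕ) : ℕ := (row D i).sup id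

/-- Index `i ≥ 2` with `l_{i-1} > l_i`. -/
def Violation (D : Dg) (i : ℕ) : Prop := 2 ≤ i ∧ lRow D i < lRow D (i - 1)

/-- `i` is the maximum index with `l_{i-1} > l_i`. -/
def MaxViolation (D : Dg) (i : ℕ) : Prop := Violation D i ∧ ∀ i', Violation D i' → i' ≤ i

/-- No index `i ≥ 2` has `l_{i-1} > l_i`. -/
def TerminalD (D : Dg) : Prop := ∀ i, ¬ Violation D i

/-- Step A is permitted at row `i`: `l_{i-1} > l_i` and (`r_i ≥ l_{i-1} - 1` or row `i-1` empty). -/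
def StepAOk (D : Dg) (i : ℕ) : Prop :=
  Violation D i ∧ (lRow D (i - 1) - 1 ≤ (rRow D i : ℕ∞) ∨ row D (i - 1) = ∅)

/-- `l_i ≤ q < l_{i-1}`: the columns affected by Step A at row `i`. -/
def InL (D : Dg) (i q : ℕ) : Prop := lRow D i ≤ (q : ℕ∞) ∧ (q : ℕ∞) < lRow D (i - 1)

/-- `D'` is the result of performing Step A on `D` at row `i`: for each column
`l_i ≤ q < l_{i-1}`, membership of `(i, q)` and `(i-1, q)` is exchanged. -/
def IsStepA (D D' : Dg) (i : ℕ) : Prop :=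
  ∀ p q : ℕ,
    (p = i → InL D i q → ((p, q) ∈ D' ↔ (i - 1, q) ∈ D)) ∧
    (p = i - 1 → InL D i q → ((p, q) ∈ D' ↔ (i, q) ∈ D)) ∧
    (¬((p = i ∨ p = i - 1) ∧ InL D i q) → ((p, q) ∈ D' ↔ (p, q) ∈ D))

/-- Step B is permitted at row `i`: `l_{i-1} > l_i` and `r_i ≤ r_{i-1} - 1`. -/
def StepBOk (D : Dg) (i : ℕ) : Prop :=
  Violation D i ∧ rRow D i ≤ rRow D (i - 1) - 1

/-- The rows affected by Step B at row `i`: rows `p ≥ i` with `l_p = l_i`. -/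
def BRow (D : Dg) (i p : ℕ) : Prop := i ≤ p ∧ lRow D p = lRow D i

/-- `D'` is the result of performing Step B on `D` at row `i`: in each row `p ≥ i` with
`l_p = l_i`, the box `(p, l_p)` is removed and the box `(p, r_p + 1)` is added. -/
def IsStepB (D D' : Dg) (i : ℕ) : Prop :=
  ∀ p q : ℕ,
    (BRow D i p →
      ((p, q) ∈ D' ↔ (((p, q) ∈ D ∧ (q : ℕ∞) ≠ lRow D p) ∨ q = rRow D p + 1))) ∧
    (¬ BRow D i p → ((p, q) ∈ D' ↔ (p, q) ∈ D))

/-- One step of Algorithm 1: at the maximum index `i` with `l_{i-1} > l_i`, perform a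
permitted Step A or Step B. -/
def AlgStep (D D' : Dg) : Prop :=
  ∃ i, MaxViolation D i ∧ ((StepAOk D i ∧ IsStepA D D' i) ∨ (StepBOk D i ∧ IsStepB D D' i))

/-- An execution of Algorithm 1 starting from `D0`: a finite sequence of diagrams beginning
at `D0`, each obtained from the previous by a step of Algorithm 1, ending at a terminal
diagram. -/
def IsExec (D0 : Dg) (L : List Dg) : Prop :=
  L.head? = some D0 ∧ L.Chain' AlgStep ∧ ∀ Dl, L.getLast? = some Dl → TerminalD Dl

/-- The indices of nonempty rows of `D`, from top to bottom. -/
def rowIdx (D : Dg) : List ℕ := (D.image Prod.fst).sort (· ≤ ·)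

/-- The lengths of the nonempty rows of `D`, read from top to bottom. -/
def rowLengths (D : Dg) : List ℕ := (rowIdx D).map (fun p => (row D p).card)

/-- The execution `L` terminates at a diagram whose nonempty rows, read from top to bottom,
have lengths `ν 1, ν 2, …`. -/
def EndsAt (L : List Dg) (ν : ℕ → ℕ) : Prop :=
  ∃ Dl, L.getLast? = some Dl ∧ ∀ m : ℕ, (rowLengths Dl).getD m 0 = ν (m + 1)

/-- The partition `f` is contained in the `k × w` rectangle. -/
def InRect (f : ℕ → ℕ) (k w : ℕ) : Prop := (∀ p, k < p → f p = 0) ∧ ∀ p, f p ≤ w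

/-- The skew Young diagram `lam / mu` (boxes of `lam` not in `mu`), rows `1, …, k`. -/
def skewD (lam mu : ℕ → ℕ) (k : ℕ) : Dg :=
  (Finset.Icc 1 k).biUnion (fun p => (Finset.Icc (mu p + 1) (lam p)).image (fun q => (p, q)))

/-- `lam^∨`, the complementary partition of `lam` inside the `k × w` rectangle. -/
def dualP (lam : ℕ → ℕ) (k w : ℕ) : ℕ → ℕ :=
  fun p => if 1 ≤ p ∧ p ≤ k then w - lam (k + 1 - p) else 0

/-- `D` is row convex. -/
def RowConvex (D : Dg) : Prop :=
  ∀ i j j' j'', (i, j) ∈ D → (i, j') ∈ D → j ≤ j'' → j'' ≤ j' → (i, j'') ∈ D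

lemma mem_row' {D : Dg} {i j : ℕ} : j ∈ row D i ↔ (i, j) ∈ D := by
  constructor
  · intro h
    simp only [row, Finset.mem_image, Finset.mem_filter] at h
    obtain ⟨⟨a, b⟩, ⟨hm, h1⟩, h2⟩ := h
    simp only at h1 h2
    subst h1; subst h2; exact hm
  · intro h
    simp only [row, Finset.mem_image, Finset.mem_filter]
    exact ⟨(i, j), ⟨h, rfl⟩, rfl⟩

lemma lRow_le' {D : Dg} {i j : ℕ} (h : (i, j) ∈ D) : lRow D i ≤ (j : ℕ∞) :=
  Finset.inf_le (mem_row'.2 h)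

lemma le_rRow' {D : Dg} {i j : ℕ} (h : (i, j) ∈ D) : j ≤ rRow D i :=
  Finset.le_sup (f := id) (mem_row'.2 h)

lemma exists_lRow' {D : Dg} {i j : ℕ} (h : (i, j) ∈ D) :
    ∃ a, (i, a) ∈ D ∧ lRow D i = (a : ℕ∞) := by
  obtain ⟨a, ha, he⟩ := Finset.exists_mem_eq_inf (row D i) ⟨j, mem_row'.2 h⟩ (fun j => (j : ℕ∞))
  exact ⟨a, mem_row'.1 ha, he⟩

lemma conv_mem' {D : Dg} (hRC : RowConvex D) {i j : ℕ} (h : (i, j) ∈ D) {q : ℕ}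
    (h1 : lRow D i ≤ (q : ℕ∞)) (h2 : q ≤ rRow D i) : (i, q) ∈ D := by
  obtain ⟨a, ha, he⟩ := exists_lRow' h
  have hne : (row D i).Nonempty := ⟨j, mem_row'.2 h⟩
  obtain ⟨b, hb, he2⟩ := Finset.exists_mem_eq_sup (row D i) hne id
  have haq : a ≤ q := by rw [he] at h1; exact_mod_cast h1
  have hqb : q ≤ b := by rw [rRow, he2] at h2; exact h2
  exact hRC i a b q ha (mem_row'.1 hb) haq hqb

lemma lRow_empty' {D : Dg} {i : ℕ} (h : row D i = ∅) : lRow D i = ⊤ := by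
  rw [lRow, h]; simp

lemma notMem_of_lt_lRow' {D : Dg} {i q : ℕ} (h : (q : ℕ∞) < lRow D i) : (i, q) ∉ D :=
  fun hm => absurd (lRow_le' hm) (not_le.2 h)


/-- Step A preserves row convexity. -/
theorem statement3 (D D' : Dg) (i : ℕ) (hRC : RowConvex D) (hi : 2 ≤ i)
    (hviol : lRow D i < lRow D (i - 1))
    (hperm : lRow D (i - 1) - 1 ≤ (rRow D i : ℕ∞) ∨ row D (i - 1) = ∅)
    (hstep : IsStepA D D' i) : RowConvex D' := by
  -- row i of D is nonempty
  have hrowi_ne : ∃ j0, (i, j0) ∈ D := by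
    by_contra h
    push_neg at h
    have : row D i = ∅ := by
      apply Finset.eq_empty_of_forall_notMem
      intro x hx
      exact h x (mem_row'.1 hx)
    rw [lRow_empty' this] at hviol
    exact absurd hviol (by simp)
  obtain ⟨j0, hj0⟩ := hrowi_ne
  obtain ⟨L, hLmem, hLeq⟩ := exists_lRow' hj0
  -- characterization of row i of D'
  have hci : ∀ q : ℕ, ((i, q) ∈ D' ↔ (lRow D (i - 1) ≤ (q : ℕ∞) ∧ q ≤ rRow D i)) := by
    intro q
    obtain ⟨hA, hB, hC⟩ := hstep i q
    by_cases hq : InL D i q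
    · have heq := hA rfl hq
      constructor
      · intro hm
        exact absurd (heq.1 hm) (notMem_of_lt_lRow' hq.2)
      · rintro ⟨h1, h2⟩
        exact absurd h1 (not_le.2 hq.2)
    · have heq := hC (fun hc => hq hc.2)
      constructor
      · intro hm
        have hmD := heq.1 hm
        have h1 := lRow_le' hmD
        have h2 := le_rRow' hmD
        refine ⟨?_, h2⟩
        by_contra hlt
        push_neg at hlt
        exact hq ⟨h1, hlt⟩
      · rintro ⟨h1, h2⟩
        exact heq.2 (conv_mem' hRC hLmem (le_trans hviol.le h1) h2)
  -- characterization of row i-1 of D'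
  have hci1 : ∃ Rb : ℕ, ∀ q : ℕ,
      ((i - 1, q) ∈ D' ↔ (lRow D i ≤ (q : ℕ∞) ∧ q ≤ Rb)) := by
    rcases hperm with hp | hp
    · -- M finite
      have hMne : lRow D (i - 1) ≠ ⊤ := by
        intro h
        rw [h] at hp
        simp at hp
      have hrow1_ne : ∃ j1, (i - 1, j1) ∈ D := by
        by_contra h
        push_neg at h
        have : row D (i - 1) = ∅ := by
          apply Finset.eq_empty_of_forall_notMem
          intro x hx
          exact h x (mem_row'.1 hx)
        exact hMne (lRow_empty' this)
      obtain ⟨j1, hj1⟩ := hrow1_ne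
      obtain ⟨M, hMmem, hMeq⟩ := exists_lRow' hj1
      refine ⟨rRow D (i - 1), fun q => ?_⟩
      obtain ⟨hA, hB, hC⟩ := hstep (i - 1) q
      by_cases hq : InL D i q
      · have heq := hB rfl hq
        constructor
        · intro hm
          refine ⟨hq.1, ?_⟩
          have h1 : (q : ℕ∞) < (M : ℕ∞) := hMeq ▸ hq.2
          have h1' : q < M := by exact_mod_cast h1
          have h2 := le_rRow' hMmem
          omega
        · rintro ⟨h1, h2⟩
          apply heq.2
          apply conv_mem' hRC hLmem h1
          have hq2 : (q : ℕ∞) < (M : ℕ∞) := hMeq ▸ hq.2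
          have hq2' : q < M := by exact_mod_cast hq2
          have h3 : (q : ℕ∞) ≤ lRow D (i - 1) - 1 := by
            rw [hMeq]
            have : ((M : ℕ∞)) - 1 = ((M - 1 : ℕ) : ℕ∞) := by
              rw [ENat.coe_sub]; rfl
            rw [this]
            exact_mod_cast Nat.le_sub_one_of_lt hq2'
          have h4 : (q : ℕ∞) ≤ (rRow D i : ℕ∞) := le_trans h3 hp
          exact_mod_cast h4
      · have heq := hC (fun hc => hq hc.2)
        constructor
        · intro hm
          have hmD := heq.1 hm
          have h1 := lRow_le' hmD
          exact ⟨le_trans hviol.le h1, le_rRow' hmD⟩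
        · rintro ⟨h1, h2⟩
          apply heq.2
          have hM : lRow D (i - 1) ≤ (q : ℕ∞) := by
            by_contra hlt
            push_neg at hlt
            exact hq ⟨h1, hlt⟩
          exact conv_mem' hRC hMmem hM h2
    · -- row i-1 empty
      have hMtop : lRow D (i - 1) = ⊤ := lRow_empty' hp
      refine ⟨rRow D i, fun q => ?_⟩
      obtain ⟨hA, hB, hC⟩ := hstep (i - 1) q
      by_cases hq : InL D i q
      · have heq := hB rfl hq
        constructor
        · intro hm
          have hmD := heq.1 hm
          exact ⟨lRow_le' hmD, le_rRow' hmD⟩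
        · rintro ⟨h1, h2⟩
          exact heq.2 (conv_mem' hRC hLmem h1 h2)
      · have heq := hC (fun hc => hq hc.2)
        constructor
        · intro hm
          have hmD := heq.1 hm
          have : q ∈ row D (i - 1) := mem_row'.2 hmD
          rw [hp] at this
          exact absurd this (Finset.notMem_empty q)
        · rintro ⟨h1, h2⟩
          exact absurd (⟨h1, by rw [hMtop]; exact Ne.lt_top (ENat.coe_ne_top q)⟩ : InL D i q) hq
  -- finish
  intro p j j' j'' hj hj' hle1 hle2
  by_cases hpi : p = i
  · subst hpi
    obtain ⟨a1, a2⟩ := (hci j).1 hj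
    obtain ⟨b1, b2⟩ := (hci j').1 hj'
    refine (hci j'').2 ⟨le_trans a1 (by exact_mod_cast hle1), le_trans hle2 b2⟩
  by_cases hpi1 : p = i - 1
  · subst hpi1
    obtain ⟨Rb, hch⟩ := hci1
    obtain ⟨a1, a2⟩ := (hch j).1 hj
    obtain ⟨b1, b2⟩ := (hch j').1 hj'
    refine (hch j'').2 ⟨le_trans a1 (by exact_mod_cast hle1), le_trans hle2 b2⟩
  · have e : ∀ q : ℕ, ((p, q) ∈ D' ↔ (p, q) ∈ D) := by
      intro q
      refine (hstep p q).2.2 ?_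
      rintro ⟨(rfl | rfl), -⟩
      exacts [hpi rfl, hpi1 rfl]
    rw [e] at hj hj' ⊢
    exact hRC p j j' j'' hj hj' hle1 hle2
end

section
/- Every execution of Algorithm 1 starting from a skew Young diagram λ/μ terminates after finitely many steps: there is no infinite sequence D_0 = λ/μ, D_1, D_2, … in which each D_{t+1} is obtained from D_t by a permitted Step A or Step B at the maximum row i with l_{i−1} > l_i. Moreover, in the terminal diagram the l_i are weakly increasing and the r_i are weakly decreasing (ignoring empty rows), so its nonempty row lengths, read from top to bottom, form a weakly decreasing sequence, i.e., right-justifying all rows yields the Young diagram of a partition justified to the northeast. -/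
open scoped ENat

/-!
Along Algorithm 1 started at a skew shape inside the `k × w` rectangle, every diagram keeps its
boxes in that rectangle, has every row an interval, and has its row ends `r_p` weakly
decreasing down the nonempty rows (`Admissible`). Step A moves boxes up one row without changing
their columns, Step B moves boxes right inside their rows; hence the pair (sum of the row
indices, room left below the maximal column sum) decreases lexicographically at every step, and
no run is infinite. In a terminal diagram the row starts `l_p` increase weakly and the row ends
decrease weakly, so the row lengths `r_p + 1 - l_p` decrease weakly.
-/

open Finset

lemma sum_sdiff_union_add_sum {α M : Type*} [DecidableEq α] [AddCommMonoid M] {s t u : Finset α}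
    (f : α → M) (ht : t ⊆ s) (hu : Disjoint s u) :
    ∑ x ∈ s \ t ∪ u, f x + ∑ x ∈ t, f x = ∑ x ∈ s, f x + ∑ x ∈ u, f x := by
  rw [sum_union (hu.mono_left sdiff_subset), add_right_comm, sum_sdiff ht]

section Rows

variable {D : Dg} {p q a b : ℕ}

@[simp] lemma mem_row : q ∈ row D p ↔ (p, q) ∈ D := by
  simp [row]

lemma lRow_le (h : (p, q) ∈ D) : lRow D p ≤ q :=
  inf_le (mem_row.2 h)

lemma le_rRow (h : (p, q) ∈ D) : q ≤ rRow D p :=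
  le_sup (f := id) (mem_row.2 h)

lemma lRow_eq_top (h : row D p = ∅) : lRow D p = ⊤ := by
  simp [lRow, h]

lemma rRow_eq_zero (h : row D p = ∅) : rRow D p = 0 := by
  simp [rRow, h]

lemma rRow_le_of_forall (h : ∀ q, (p, q) ∈ D → q ≤ b) : rRow D p ≤ b :=
  Finset.sup_le fun q hq => h q (mem_row.1 hq)

lemma lRow_eq_of_row_eq_Icc (h : row D p = Icc a b) (hab : a ≤ b) : lRow D p = a := by
  rw [lRow, h]
  exact le_antisymm (inf_le (by simp [hab]))
    (Finset.le_inf fun j hj => by exact_mod_cast (mem_Icc.1 hj).1)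

lemma rRow_eq_of_row_eq_Icc (h : row D p = Icc a b) (hab : a ≤ b) : rRow D p = b := by
  rw [rRow, h]
  exact le_antisymm (Finset.sup_le fun j hj => (mem_Icc.1 hj).2)
    (le_sup (f := id) (by simp [hab]))

lemma row_nonempty_of_lRow_ne_top (h : lRow D p ≠ ⊤) : (row D p).Nonempty := by
  contrapose h
  exact lRow_eq_top (not_nonempty_iff_eq_empty.1 h)

lemma Violation.row_nonempty {i : ℕ} (hv : Violation D i) : (row D i).Nonempty :=
  row_nonempty_of_lRow_ne_top hv.2.ne_top

lemma lRow_le_of_forall_not_violation {m : ℕ} (hm : 1 ≤ m) (h : ∀ j, m < j → ¬ Violation D j)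
    (hmp : m ≤ p) (hpq : p ≤ q) : lRow D p ≤ lRow D q := by
  induction q, hpq using Nat.le_induction with
  | base => exact le_rfl
  | succ q hpq ih =>
    have := h (q + 1) (by omega)
    simp only [Violation, Nat.add_sub_cancel, not_and, not_lt] at this
    exact ih.trans (this (by omega))

lemma exists_mem_row_lRow_eq (hp : (row D p).Nonempty) :
    ∃ q, (p, q) ∈ D ∧ lRow D p = q := by
  obtain ⟨q, hq, heq⟩ := exists_mem_eq_inf (row D p) hp (fun j => (j : ℕ∞))
  exact ⟨q, mem_row.1 hq, heq⟩

lemma not_mem_of_lt_lRow (h : (q : ℕ∞) < lRow D p) : (p, q) ∉ D :=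
  fun hq => (lRow_le hq).not_gt h

end Rows

section Algorithm

variable {k w : ℕ} {D D' : Dg} {i p : ℕ}

structure Admissible (k w : ℕ) (D : Dg) : Prop where
  subset_grid : D ⊆ Icc 1 k ×ˢ Icc 1 w
  row_eq_Icc : ∀ p, ∃ a b, row D p = Icc a b
  rRow_anti : ∀ p q, p < q → (row D p).Nonempty → rRow D q ≤ rRow D p

lemma Admissible.exists_row_eq_Icc (h : Admissible k w D)
    (hp : (row D p).Nonempty) : ∃ a b, a ≤ b ∧ row D p = Icc a b := by
  obtain ⟨a, b, hab⟩ := h.row_eq_Icc p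
  exact ⟨a, b, nonempty_Icc.1 (hab ▸ hp), hab⟩

lemma Admissible.mem_grid (h : Admissible k w D) {q : ℕ} (hq : (p, q) ∈ D) :
    (1 ≤ p ∧ p ≤ k) ∧ 1 ≤ q ∧ q ≤ w := by
  simpa only [mem_product, mem_Icc] using h.subset_grid hq

lemma Admissible.rRow_le (h : Admissible k w D) : rRow D p ≤ w :=
  rRow_le_of_forall fun _ hq => (h.mem_grid hq).2.2

noncomputable def stepACols (D : Dg) (i : ℕ) : Finset ℕ :=
  (row D i).filter fun q => (q : ℕ∞) < lRow D (i - 1)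

lemma IsStepA.row_self (hA : IsStepA D D' i) : row D' i = row D i \ stepACols D i := by
  ext q
  obtain ⟨h1, -, h3⟩ := hA i q
  by_cases hq : InL D i q
  · simp [stepACols, h1 rfl hq, not_mem_of_lt_lRow hq.2, hq.2]
  · have : (i, q) ∈ D → ¬ (q : ℕ∞) < lRow D (i - 1) := fun hm hlt => hq ⟨lRow_le hm, hlt⟩
    simp only [mem_row, h3 (fun h => hq h.2), stepACols, mem_sdiff, mem_filter]
    tauto

lemma IsStepA.row_pred (hA : IsStepA D D' i) :
    row D' (i - 1) = row D (i - 1) ∪ stepACols D i := by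
  ext q
  obtain ⟨-, h2, h3⟩ := hA (i - 1) q
  by_cases hq : InL D i q
  · simp [stepACols, h2 rfl hq, not_mem_of_lt_lRow hq.2, hq.2]
  · have : (i, q) ∈ D → ¬ (q : ℕ∞) < lRow D (i - 1) := fun hm hlt => hq ⟨lRow_le hm, hlt⟩
    simp only [mem_row, h3 (fun h => hq h.2), stepACols, mem_union, mem_filter]
    tauto

lemma IsStepA.row_of_ne (hA : IsStepA D D' i) (hi : p ≠ i) (hi' : p ≠ i - 1) :
    row D' p = row D p := by
  ext q
  simp [(hA p q).2.2 (by tauto)]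

lemma IsStepA.eq (hA : IsStepA D D' i) (hi : 2 ≤ i) :
    D' = D \ {i} ×ˢ stepACols D i ∪ {i - 1} ×ˢ stepACols D i := by
  ext ⟨p, q⟩
  rw [← mem_row]
  rcases eq_or_ne p i with rfl | hpi
  · simp [hA.row_self, show p - 1 ≠ p by omega]
  · rcases eq_or_ne p (i - 1) with rfl | hpi'
    · simp [hA.row_pred, hpi.symm]
    · simp [hA.row_of_ne hpi hpi', hpi.symm, hpi'.symm]

-- `max` covers an empty row `i - 1`, whose `rRow` is `0`.
lemma Admissible.exists_rows_of_isStepA (h : Admissible k w D) (hok : StepAOk D i)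
    (hA : IsStepA D D' i) : ∃ a c r, a ≤ r ∧ row D i = Icc a r ∧ row D' i = Icc c r ∧
      row D' (i - 1) = Icc a (max (rRow D (i - 1)) r) := by
  obtain ⟨a, r, har, hrow⟩ := h.exists_row_eq_Icc hok.1.row_nonempty
  have hla : lRow D i = a := lRow_eq_of_row_eq_Icc hrow har
  obtain ⟨c, R, hrow'⟩ := h.row_eq_Icc (i - 1)
  rcases lt_or_ge R c with hRc | hcR
  · have he : row D (i - 1) = ∅ := by rw [hrow']; exact Icc_eq_empty_of_lt hRc
    refine ⟨a, r + 1, r, har, hrow, ?_, ?_⟩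
    · ext q
      simp [hA.row_self, stepACols, lRow_eq_top he]
    · ext q
      simp [hA.row_pred, stepACols, lRow_eq_top he, rRow_eq_zero he, he, hrow]
  · have hlc : lRow D (i - 1) = c := lRow_eq_of_row_eq_Icc hrow' hcR
    have hac : a < c := by exact_mod_cast hla ▸ hlc ▸ hok.1.2
    have hcr : c ≤ r + 1 := by
      rcases hok.2 with hle | he
      · have : c - 1 ≤ r := by rw [hlc, rRow_eq_of_row_eq_Icc hrow har] at hle; exact_mod_cast hle
        omega
      · simp [hrow', hcR] at he
    have hrR : r ≤ R := by
      have := h.rRow_anti (i - 1) i (by have := hok.1.1; omega) (by simp [hrow', hcR])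
      rwa [rRow_eq_of_row_eq_Icc hrow har, rRow_eq_of_row_eq_Icc hrow' hcR] at this
    refine ⟨a, c, r, har, hrow, ?_, ?_⟩
    · ext q
      simp only [hA.row_self, stepACols, hrow, hlc, mem_sdiff, mem_filter, mem_Icc, Nat.cast_lt]
      omega
    · ext q
      simp only [hA.row_pred, stepACols, hrow, hrow', hlc, rRow_eq_of_row_eq_Icc hrow' hcR,
        max_eq_left hrR, mem_union, mem_filter, mem_Icc, Nat.cast_lt]
      omega

lemma Admissible.subset_grid_of_isStepA (h : Admissible k w D) (hi : 2 ≤ i) (hA : IsStepA D D' i) :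
    D' ⊆ Icc 1 k ×ˢ Icc 1 w := by
  rw [hA.eq hi]
  refine union_subset (sdiff_subset.trans h.subset_grid) fun b hb => ?_
  simp only [mem_product, mem_singleton, stepACols, mem_filter, mem_row] at hb
  have := mem_product.1 (h.subset_grid hb.2.1)
  simp only [mem_product, mem_Icc] at this ⊢
  omega

lemma Admissible.of_isStepA (h : Admissible k w D) (hok : StepAOk D i) (hA : IsStepA D D' i) :
    Admissible k w D' := by
  have hi : 2 ≤ i := hok.1.1
  obtain ⟨a, c, r, har, hrow, hrow_i, hrow_pred⟩ := h.exists_rows_of_isStepA hok hA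
  have hr : rRow D i = r := rRow_eq_of_row_eq_Icc hrow har
  have hr_pred : rRow D' (i - 1) = max (rRow D (i - 1)) r :=
    rRow_eq_of_row_eq_Icc hrow_pred (le_max_of_le_right har)
  have hr_self (hne : (row D' i).Nonempty) : rRow D' i = r :=
    rRow_eq_of_row_eq_Icc hrow_i (nonempty_Icc.1 (hrow_i ▸ hne))
  have hr_le (q : ℕ) (hq : q ≠ i - 1) : rRow D' q ≤ rRow D q := by
    rcases eq_or_ne q i with rfl | hqi
    · rcases (row D' q).eq_empty_or_nonempty with he | hne
      · simp [rRow_eq_zero he]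
      · rw [hr_self hne, hr]
    · rw [rRow, rRow, hA.row_of_ne hqi hq]
  have hr_below (q : ℕ) (hq : i ≤ q) : rRow D q ≤ r := by
    rcases hq.eq_or_lt with rfl | hlt
    · exact hr.le
    · exact hr ▸ h.rRow_anti i q hlt (by simp [hrow, har])
  refine ⟨h.subset_grid_of_isStepA hi hA, fun p => ?_, fun p q hpq hp => ?_⟩
  · rcases eq_or_ne p i with rfl | hpi
    · exact ⟨c, r, hrow_i⟩
    rcases eq_or_ne p (i - 1) with rfl | hpi'
    · exact ⟨a, _, hrow_pred⟩
    · exact hA.row_of_ne hpi hpi' ▸ h.row_eq_Icc p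
  · rcases eq_or_ne p (i - 1) with rfl | hpi'
    · rw [hr_pred]
      exact (hr_le q (by omega)).trans ((hr_below q (by omega)).trans (le_max_right _ _))
    rcases eq_or_ne p i with rfl | hpi
    · rw [hr_self hp]
      exact (hr_le q (by omega)).trans (hr_below q hpq.le)
    have hp' : (row D p).Nonempty := hA.row_of_ne hpi hpi' ▸ hp
    rw [show rRow D' p = rRow D p by simp only [rRow, hA.row_of_ne hpi hpi']]
    rcases eq_or_ne q (i - 1) with rfl | hq
    · rw [hr_pred]
      exact max_le (h.rRow_anti p (i - 1) hpq hp') (hr ▸ h.rRow_anti p i (by omega) hp')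
    · exact (hr_le q hq).trans (h.rRow_anti p q hpq hp')

lemma BRow.row_nonempty (hv : Violation D i) (hp : BRow D i p) : (row D p).Nonempty :=
  row_nonempty_of_lRow_ne_top (hp.2 ▸ hv.2.ne_top)

noncomputable def stepBRows (D : Dg) (i : ℕ) : Finset ℕ :=
  (D.image Prod.fst).filter fun p => i ≤ p ∧ lRow D p = lRow D i

lemma mem_stepBRows (hv : Violation D i) : p ∈ stepBRows D i ↔ BRow D i p := by
  refine ⟨fun hp => (mem_filter.1 hp).2, fun hp => mem_filter.2 ⟨?_, hp⟩⟩
  obtain ⟨q, hq⟩ := hp.row_nonempty hv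
  exact mem_image.2 ⟨(p, q), mem_row.1 hq, rfl⟩

lemma IsStepB.row_of_not_bRow (hB : IsStepB D D' i) (hp : ¬ BRow D i p) : row D' p = row D p := by
  ext q
  simp [(hB p q).2 hp]

lemma IsStepB.eq (hB : IsStepB D D' i) (hv : Violation D i) :
    D' = D \ (stepBRows D i).image (fun p => (p, (lRow D p).toNat)) ∪
      (stepBRows D i).image (fun p => (p, rRow D p + 1)) := by
  ext ⟨p, q⟩
  by_cases hp : BRow D i p
  · obtain ⟨m, hm⟩ := ENat.ne_top_iff_exists.1 (hp.2 ▸ hv.2.ne_top)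
    simp [(hB p q).1 hp, mem_stepBRows hv, hp, ← hm, eq_comm]
  · simp [(hB p q).2 hp, mem_stepBRows hv, hp]

lemma Admissible.exists_row_of_isStepB (h : Admissible k w D) (hv : Violation D i)
    (hB : IsStepB D D' i) (hp : BRow D i p) :
    ∃ a r, a ≤ r ∧ row D p = Icc a r ∧ row D' p = Icc (a + 1) (r + 1) := by
  obtain ⟨a, r, har, hrow⟩ := h.exists_row_eq_Icc (hp.row_nonempty hv)
  refine ⟨a, r, har, hrow, ?_⟩
  ext q
  rw [mem_row, (hB p q).1 hp, ← mem_row, hrow, lRow_eq_of_row_eq_Icc hrow har,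
    rRow_eq_of_row_eq_Icc hrow har]
  simp only [mem_Icc, ne_eq, Nat.cast_inj]
  omega

lemma Admissible.rRow_add_one_le_of_bRow (h : Admissible k w D) (hok : StepBOk D i)
    (hp : BRow D i p) : rRow D p + 1 ≤ rRow D (i - 1) := by
  obtain ⟨q, hq⟩ := hok.1.row_nonempty
  have hr_i : 1 ≤ rRow D i := (h.mem_grid (mem_row.1 hq)).2.1.trans (le_rRow (mem_row.1 hq))
  have hr_p : rRow D p ≤ rRow D i := by
    rcases hp.1.eq_or_lt with rfl | hlt
    · exact le_rfl
    · exact h.rRow_anti i p hlt hok.1.row_nonempty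
  have hr_pred := hok.2
  omega

lemma MaxViolation.bRow_of_le {q : ℕ} (hmax : MaxViolation D i) (hq : BRow D i q) (hip : i ≤ p)
    (hpq : p ≤ q) : BRow D i p := by
  have hmono {a b : ℕ} (ha : i ≤ a) (hab : a ≤ b) : lRow D a ≤ lRow D b :=
    lRow_le_of_forall_not_violation (by linarith [hmax.1.1])
      (fun j hj hvj => by linarith [hmax.2 j hvj]) ha hab
  exact ⟨hip, le_antisymm (hq.2 ▸ hmono hip hpq) (hmono le_rfl hip)⟩

lemma Admissible.subset_grid_of_isStepB (h : Admissible k w D) (hok : StepBOk D i)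
    (hB : IsStepB D D' i) : D' ⊆ Icc 1 k ×ˢ Icc 1 w := by
  rintro ⟨p, q⟩ hq
  by_cases hp : BRow D i p
  · obtain ⟨a, r, har, hrow, hrow'⟩ := h.exists_row_of_isStepB hok.1 hB hp
    have ha := h.mem_grid (mem_row.1 (hrow ▸ left_mem_Icc.2 har))
    have hq' := mem_Icc.1 (hrow' ▸ mem_row.2 hq)
    have hr_p := h.rRow_add_one_le_of_bRow hok hp
    have hr_pred := h.rRow_le (p := i - 1)
    rw [rRow_eq_of_row_eq_Icc hrow har] at hr_p
    simp only [mem_product, mem_Icc]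
    omega
  · exact h.subset_grid (mem_row.1 (hB.row_of_not_bRow hp ▸ mem_row.2 hq))

lemma Admissible.of_isStepB (h : Admissible k w D) (hmax : MaxViolation D i) (hok : StepBOk D i)
    (hB : IsStepB D D' i) : Admissible k w D' := by
  have hv := hok.1
  have hr_succ {p : ℕ} (hp : BRow D i p) : rRow D' p = rRow D p + 1 := by
    obtain ⟨a, r, har, hrow, hrow'⟩ := h.exists_row_of_isStepB hv hB hp
    rw [rRow_eq_of_row_eq_Icc hrow har, rRow_eq_of_row_eq_Icc hrow' (by omega)]
  have hr_eq {p : ℕ} (hp : ¬ BRow D i p) : rRow D' p = rRow D p := by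
    simp only [rRow, hB.row_of_not_bRow hp]
  refine ⟨h.subset_grid_of_isStepB hok hB, fun p => ?_, fun p q hpq hp => ?_⟩
  · by_cases hp : BRow D i p
    · obtain ⟨a, r, -, -, hrow'⟩ := h.exists_row_of_isStepB hv hB hp
      exact ⟨_, _, hrow'⟩
    · exact hB.row_of_not_bRow hp ▸ h.row_eq_Icc p
  by_cases hq : BRow D i q <;> by_cases hp' : BRow D i p
  · rw [hr_succ hq, hr_succ hp']
    exact Nat.add_le_add_right (h.rRow_anti p q hpq (hp'.row_nonempty hv)) 1
  · have hpi : p < i := by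
      by_contra! hip
      exact hp' (hmax.bRow_of_le hq hip hpq.le)
    have hp_ne : (row D p).Nonempty := hB.row_of_not_bRow hp' ▸ hp
    have : rRow D (i - 1) ≤ rRow D p := by
      rcases (show p ≤ i - 1 by omega).eq_or_lt with rfl | hlt
      · exact le_rfl
      · exact h.rRow_anti p (i - 1) hlt hp_ne
    rw [hr_succ hq, hr_eq hp']
    linarith [h.rRow_add_one_le_of_bRow hok hq]
  · rw [hr_eq hq, hr_succ hp']
    exact (h.rRow_anti p q hpq (hp'.row_nonempty hv)).trans (Nat.le_succ _)
  · rw [hr_eq hq, hr_eq hp']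
    exact h.rRow_anti p q hpq (hB.row_of_not_bRow hp' ▸ hp)

def potential (k w : ℕ) (D : Dg) : ℕ ×ₗ ℕ :=
  toLex (∑ b ∈ D, b.1, ∑ b ∈ Icc 1 k ×ˢ Icc 1 w, b.2 - ∑ b ∈ D, b.2)

lemma potential_lt_of_isStepA (hv : Violation D i) (hA : IsStepA D D' i) :
    potential k w D' < potential k w D := by
  have hsub : {i} ×ˢ stepACols D i ⊆ D := by
    rintro ⟨p, q⟩ hb
    simp only [mem_product, mem_singleton, stepACols, mem_filter, mem_row] at hb
    obtain ⟨rfl, hq, -⟩ := hb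
    exact hq
  have hdisj : Disjoint D ({i - 1} ×ˢ stepACols D i) := by
    refine disjoint_right.2 fun b hb hbD => ?_
    simp only [mem_product, mem_singleton, stepACols, mem_filter] at hb
    exact not_mem_of_lt_lRow hb.2.2 (hb.1 ▸ hbD)
  have hcard : 0 < #(stepACols D i) := by
    obtain ⟨q, hq, hlq⟩ := exists_mem_row_lRow_eq hv.row_nonempty
    exact card_pos.2 ⟨q, mem_filter.2 ⟨mem_row.2 hq, hlq ▸ hv.2⟩⟩
  have hrows := sum_sdiff_union_add_sum Prod.fst hsub hdisj
  have hcols := sum_sdiff_union_add_sum Prod.snd hsub hdisj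
  rw [← hA.eq hv.1] at hrows hcols
  simp only [sum_product, sum_singleton, sum_const, card_singleton, smul_eq_mul, one_mul,
    add_left_inj] at hrows hcols
  obtain ⟨j, rfl⟩ : ∃ j, i = j + 1 := ⟨i - 1, by have := hv.1; omega⟩
  rw [Nat.add_sub_cancel, mul_add_one] at hrows
  rw [potential, potential, hcols, Prod.Lex.toLex_lt_toLex]
  left
  omega

lemma potential_lt_of_isStepB (hD' : D' ⊆ Icc 1 k ×ˢ Icc 1 w) (hv : Violation D i)
    (hB : IsStepB D D' i) : potential k w D' < potential k w D := by
  set S := stepBRows D i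
  have hsub : S.image (fun p => (p, (lRow D p).toNat)) ⊆ D := by
    intro b hb
    obtain ⟨p, hp, rfl⟩ := mem_image.1 hb
    obtain ⟨q, hq, hlq⟩ := exists_mem_row_lRow_eq (((mem_stepBRows hv).1 hp).row_nonempty hv)
    simpa [hlq] using hq
  have hdisj : Disjoint D (S.image fun p => (p, rRow D p + 1)) := by
    refine disjoint_right.2 fun b hb hbD => ?_
    obtain ⟨p, -, rfl⟩ := mem_image.1 hb
    exact (le_rRow hbD).not_gt (Nat.lt_succ_self _)
  have hinj (f : ℕ → ℕ) : Set.InjOn (fun p => (p, f p)) S := fun _ _ _ _ h => (Prod.mk.inj h).1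
  have hrows := sum_sdiff_union_add_sum Prod.fst hsub hdisj
  have hcols := sum_sdiff_union_add_sum Prod.snd hsub hdisj
  rw [← hB.eq hv] at hrows hcols
  simp only [sum_image (hinj _), add_left_inj] at hrows hcols
  have hlt : ∑ p ∈ S, (lRow D p).toNat < ∑ p ∈ S, (rRow D p + 1) := by
    refine sum_lt_sum_of_nonempty ⟨i, (mem_stepBRows hv).2 ⟨le_rfl, rfl⟩⟩ fun p hp => ?_
    exact Nat.lt_succ_of_le (le_rRow (hsub (mem_image_of_mem _ hp)))
  have hbound := sum_le_sum_of_subset (f := Prod.snd) hD'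
  rw [potential, potential, hrows, Prod.Lex.toLex_lt_toLex]
  right
  exact ⟨rfl, by omega⟩

lemma Admissible.of_algStep (h : Admissible k w D) (hs : AlgStep D D') : Admissible k w D' := by
  obtain ⟨i, hmax, ⟨hok, hA⟩ | ⟨hok, hB⟩⟩ := hs
  · exact h.of_isStepA hok hA
  · exact h.of_isStepB hmax hok hB

lemma Admissible.potential_lt_of_algStep (h : Admissible k w D) (hs : AlgStep D D') :
    potential k w D' < potential k w D := by
  obtain ⟨i, hmax, ⟨hok, hA⟩ | ⟨hok, hB⟩⟩ := hs
  · exact potential_lt_of_isStepA hok.1 hA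
  · exact potential_lt_of_isStepB (h.subset_grid_of_isStepB hok hB) hok.1 hB

lemma Admissible.of_isChain {L : List Dg} (h : Admissible k w D)
    (hL : L.IsChain AlgStep) (hhead : L.head? = some D) : ∀ D' ∈ L, Admissible k w D' := by
  refine hL.induction _ _ (fun _ _ hs hx => hx.of_algStep hs) fun _ => ?_
  obtain ⟨L', rfl⟩ := List.head?_eq_some_iff.1 hhead
  exact h

lemma Admissible.rowLengths_pairwise (h : Admissible k w D) (hT : TerminalD D) :
    (rowLengths D).Pairwise (· ≥ ·) := by
  rw [rowLengths, List.pairwise_map]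
  refine (pairwise_sort _ _).imp_of_mem fun {a b} ha hb hab => ?_
  have hne {p : ℕ} (hp : p ∈ rowIdx D) : (row D p).Nonempty := by
    obtain ⟨⟨p', q⟩, hq, rfl⟩ := mem_image.1 ((mem_sort _).1 hp)
    exact ⟨q, mem_row.2 hq⟩
  obtain ⟨la, ra, hla, hrowa⟩ := h.exists_row_eq_Icc (hne ha)
  obtain ⟨lb, rb, hlb, hrowb⟩ := h.exists_row_eq_Icc (hne hb)
  rcases hab.eq_or_lt with rfl | hlt
  · exact le_rfl
  have ha1 : 1 ≤ a := (h.mem_grid (mem_row.1 (hrowa ▸ left_mem_Icc.2 hla))).1.1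
  have hl := lRow_le_of_forall_not_violation ha1 (fun j _ => hT j) le_rfl hlt.le
  have hr := h.rRow_anti a b hlt (hne ha)
  rw [lRow_eq_of_row_eq_Icc hrowa hla, lRow_eq_of_row_eq_Icc hrowb hlb, Nat.cast_le] at hl
  rw [rRow_eq_of_row_eq_Icc hrowa hla, rRow_eq_of_row_eq_Icc hrowb hlb] at hr
  simp only [hrowa, hrowb, Nat.card_Icc]
  omega

end Algorithm

lemma IsPartition.antitone {f : ℕ → ℕ} (hf : IsPartition f) {a b : ℕ} (ha : 1 ≤ a)
    (hab : a ≤ b) : f b ≤ f a := by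
  induction b, hab using Nat.le_induction with
  | base => exact le_rfl
  | succ b hab ih => exact (hf.2 b (by omega)).trans ih

lemma mem_skewD {lam mu : ℕ → ℕ} {k p q : ℕ} :
    (p, q) ∈ skewD lam mu k ↔ (1 ≤ p ∧ p ≤ k) ∧ mu p + 1 ≤ q ∧ q ≤ lam p := by
  simp [skewD, and_assoc]

lemma admissible_skewD {lam : ℕ → ℕ} (mu : ℕ → ℕ) (k : ℕ) (hlam : IsPartition lam) :
    Admissible k (lam 1) (skewD lam mu k) := by
  refine ⟨fun ⟨p, q⟩ hb => ?_, fun p => ?_, fun p q hpq hp => ?_⟩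
  · have hlam_p := hlam.antitone le_rfl (mem_skewD.1 hb).1.1
    simp only [mem_skewD] at hb
    simp only [mem_product, mem_Icc]
    omega
  · refine ⟨mu p + 1, if 1 ≤ p ∧ p ≤ k then lam p else 0, ?_⟩
    ext q
    simp only [mem_row, mem_skewD, mem_Icc]
    split_ifs <;> omega
  · obtain ⟨y, hy⟩ := hp
    obtain ⟨hp_range, hy⟩ := mem_skewD.1 (mem_row.1 hy)
    calc rRow (skewD lam mu k) q ≤ lam q := rRow_le_of_forall fun _ hz => (mem_skewD.1 hz).2.2
      _ ≤ lam p := hlam.antitone hp_range.1 hpq.le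
      _ ≤ rRow (skewD lam mu k) p := le_rRow (mem_skewD.2 ⟨hp_range, by omega, le_rfl⟩)

lemma isPartition_getD_cons_zero {l : List ℕ} (hl : l.Pairwise (· ≥ ·)) :
    IsPartition fun m => (0 :: l).getD m 0 := by
  refine ⟨rfl, fun p hp => ?_⟩
  obtain ⟨j, rfl⟩ : ∃ j, p = j + 1 := ⟨p - 1, by omega⟩
  simp only [List.getD_cons_succ]
  by_cases hj : j + 1 < l.length
  · rw [List.getD_eq_getElem _ _ hj, List.getD_eq_getElem _ _ (by omega)]
    exact List.pairwise_iff_getElem.1 hl j (j + 1) _ hj (by omega)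
  · rw [List.getD_eq_default _ _ (by omega)]
    exact Nat.zero_le _

theorem statement5_general (lam mu : ℕ → ℕ) (k : ℕ)
    (hlam : IsPartition lam) :
    (∀ Dseq : ℕ → Dg, Dseq 0 = skewD lam mu k →
      ¬ ∀ t, AlgStep (Dseq t) (Dseq (t + 1))) ∧
    (∀ (L : List Dg) (Dl : Dg), L.head? = some (skewD lam mu k) → L.Chain' AlgStep →
      L.getLast? = some Dl → TerminalD Dl →
      (∀ p q, 1 ≤ p → p ≤ q → lRow Dl p ≤ lRow Dl q) ∧
      (∀ p q, p < q → (row Dl p).Nonempty → (row Dl q).Nonempty → rRow Dl q ≤ rRow Dl p) ∧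
      List.Pairwise (· ≥ ·) (rowLengths Dl) ∧
      ∃ ν : ℕ → ℕ, IsPartition ν ∧ ∀ m : ℕ, (rowLengths Dl).getD m 0 = ν (m + 1)) := by
  have h₀ := admissible_skewD mu k hlam
  refine ⟨fun Dseq h0 hstep => ?_, fun L Dl hhead hchain hlast hT => ?_⟩
  · have hadm (t : ℕ) : Admissible k (lam 1) (Dseq t) := by
      induction t with
      | zero => exact h0 ▸ h₀
      | succ t ih => exact ih.of_algStep (hstep t)
    exact not_strictAnti_of_wellFoundedLT (potential k (lam 1) ∘ Dseq)
      (strictAnti_nat_of_succ_lt fun t => (hadm t).potential_lt_of_algStep (hstep t))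
  · have h := h₀.of_isChain hchain hhead Dl (List.mem_of_getLast? hlast)
    have hsorted := h.rowLengths_pairwise hT
    exact ⟨fun p q hp => lRow_le_of_forall_not_violation hp (fun j _ => hT j) le_rfl,
      fun p q hpq hp _ => h.rRow_anti p q hpq hp, hsorted,
      _, isPartition_getD_cons_zero hsorted, fun m => rfl⟩

/-- Algorithm 1 started at a skew Young diagram always terminates: there
is no infinite sequence of steps; moreover in any terminal diagram of an execution the
`l_i` are weakly increasing, the `r_i` are weakly decreasing along nonempty rows, and the
nonempty row lengths, read top to bottom, form a weakly decreasing sequence, i.e. the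
Young diagram of a partition (justified to the northeast). -/
theorem statement5 (lam mu : ℕ → ℕ) (k : ℕ)
    (hlam : IsPartition lam) (hmu : IsPartition mu) (hsub : ∀ p, mu p ≤ lam p)
    (hbd : ∀ p, k < p → lam p = 0) :
    (∀ Dseq : ℕ → Dg, Dseq 0 = skewD lam mu k →
      ¬ ∀ t, AlgStep (Dseq t) (Dseq (t + 1))) ∧
    (∀ (L : List Dg) (Dl : Dg), L.head? = some (skewD lam mu k) → L.Chain' AlgStep →
      L.getLast? = some Dl → TerminalD Dl →
      (∀ p q, 1 ≤ p → p ≤ q → lRow Dl p ≤ lRow Dl q) ∧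
      (∀ p q, p < q → (row Dl p).Nonempty → (row Dl q).Nonempty → rRow Dl q ≤ rRow Dl p) ∧
      List.Pairwise (· ≥ ·) (rowLengths Dl) ∧
      ∃ ν : ℕ → ℕ, IsPartition ν ∧ ∀ m : ℕ, (rowLengths Dl).getD m 0 = ν (m + 1)) :=
  statement5_general lam mu k hlam
end

section
/- Let D be a diagram, i_1 ≠ i_2 two row indices, and D^A the diagram obtained from D by moving boxes from row i_1 to row i_2 within their columns where possible, with φ the induced column-preserving bijection from the boxes of D to the boxes of D^A and all elements associated to D^A regarded in ℂ[Σ_D] via φ. Then for every σ ∈ R_D with σ ∉ R_{D^A}, the product C(D)·σ·R(D^A) equals 0 in ℂ[Σ_D]. -/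
/-- The sum `Σ σ` over all permutations preserving the value of `g` (e.g. the row or the
column of every box), in the group algebra `ℂ[Perm α]`. -/
noncomputable def Rsum {α : Type} [Fintype α] [DecidableEq α] (g : α → ℕ) :
    MonoidAlgebra ℂ (Equiv.Perm α) :=
  ∑ σ ∈ Finset.univ.filter (fun σ : Equiv.Perm α => ∀ b, g (σ b) = g b),
    MonoidAlgebra.single σ 1

/-- The signed sum `Σ sgn(σ)·σ` over all permutations preserving the value of `g`, in the
group algebra `ℂ[Perm α]`. -/
noncomputable def Csum {α : Type} [Fintype α] [DecidableEq α] (g : α → ℕ) :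
    MonoidAlgebra ℂ (Equiv.Perm α) :=
  ∑ σ ∈ Finset.univ.filter (fun σ : Equiv.Perm α => ∀ b, g (σ b) = g b),
    MonoidAlgebra.single σ ((Equiv.Perm.sign σ : ℤ) : ℂ)

/-!
Pick a box `b` that `φ` moves from row `i1` to row `i2` although `σ b` is not moved; it exists
because a permutation of a finite set mapping the moved boxes into themselves would preserve the
rows of `D^A`. The boxes `σ b` and `(i2, col (σ b))` of `D` then lie in one column, and their
transposition `t` satisfies `t σ = σ t'` with `t' ∈ R_{D^A}` exchanging two boxes of row `i2` of
`D^A`. Since `C(D) t = -C(D)` and `t' R(D^A) = R(D^A)`, the product `C(D) σ R(D^A)` equals its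
own negative.
-/

open Equiv MonoidAlgebra

section GroupAlgebra

variable {α : Type} [Fintype α] [DecidableEq α]

lemma single_mul_Rsum {g : α → ℕ} {t : Perm α} (ht : ∀ b, g (t b) = g b) :
    single t (1 : ℂ) * Rsum g = Rsum g := by
  rw [Rsum, Finset.mul_sum]
  refine Finset.sum_equiv (Equiv.mulLeft t) (fun τ => ?_) (fun τ _ => ?_)
  · simp only [Finset.mem_filter, Finset.mem_univ, true_and, coe_mulLeft, Perm.mul_apply, ht]
  · rw [single_mul_single, one_mul, coe_mulLeft]

lemma Csum_mul_single_sign {g : α → ℕ} {t : Perm α} (ht : ∀ b, g (t b) = g b) :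
    Csum g * single t ((Perm.sign t : ℤ) : ℂ) = Csum g := by
  rw [Csum, Finset.sum_mul]
  refine Finset.sum_equiv (Equiv.mulRight t) (fun τ => ?_) (fun τ _ => ?_)
  · simp only [Finset.mem_filter, Finset.mem_univ, true_and, coe_mulRight, Perm.mul_apply]
    rw [← t.forall_congr_right]
    simp only [ht]
  · rw [single_mul_single, coe_mulRight, Perm.sign_mul]
    push_cast
    rfl

theorem Csum_mul_single_mul_Rsum_eq_zero {col row : α → ℕ} {σ : Perm α} {u v : α} (huv : u ≠ v)
    (hcol : col u = col v) (hrow : row (σ⁻¹ u) = row (σ⁻¹ v)) :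
    Csum col * single σ (1 : ℂ) * Rsum row = 0 := by
  have hC : Csum col * single (swap u v) (-1 : ℂ) = Csum col := by
    simpa [Perm.sign_swap huv] using Csum_mul_single_sign (apply_swap_eq_self hcol)
  have hR : single (swap (σ⁻¹ u) (σ⁻¹ v)) (1 : ℂ) * Rsum row = Rsum row :=
    single_mul_Rsum (apply_swap_eq_self hrow)
  have hconj : swap u v * σ * swap (σ⁻¹ u) (σ⁻¹ v) = σ := by
    rw [swap_mul_eq_mul_swap, mul_assoc, swap_mul_self, mul_one]
  have hself_neg : Csum col * single σ (1 : ℂ) * Rsum row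
      = -(Csum col * single σ (1 : ℂ) * Rsum row) :=
    calc Csum col * single σ (1 : ℂ) * Rsum row
        = Csum col * single (swap u v) (-1 : ℂ) * single σ 1 *
            (single (swap (σ⁻¹ u) (σ⁻¹ v)) 1 * Rsum row) := by
          rw [hC, hR]
      _ = Csum col * (single (swap u v) (-1 : ℂ) * single σ 1 *
            single (swap (σ⁻¹ u) (σ⁻¹ v)) 1) * Rsum row := by
          simp only [mul_assoc]
      _ = Csum col * single σ (-1 : ℂ) * Rsum row := by
          rw [single_mul_single, single_mul_single, hconj, mul_one, mul_one]
      _ = -(Csum col * single σ (1 : ℂ) * Rsum row) := by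
          rw [single_neg, mul_neg, neg_mul]
  have htwo : (2 : ℂ) • (Csum col * single σ (1 : ℂ) * Rsum row) = 0 := by
    rw [two_smul]
    nth_rw 1 [hself_neg]
    exact neg_add_cancel _
  exact (smul_eq_zero.mp htwo).resolve_left two_ne_zero

end GroupAlgebra

theorem statement11_general (D DA : Dg) (i1 i2 : ℕ) (h12 : i1 ≠ i2)
    (φ : {x : ℕ × ℕ // x ∈ D} ≃ {x : ℕ × ℕ // x ∈ DA})
    (hφ : ∀ b : {x : ℕ × ℕ // x ∈ D},
      (φ b).val = if b.val.1 = i1 ∧ (i2, b.val.2) ∉ D then (i2, b.val.2) else b.val)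
    (σ : Equiv.Perm {x : ℕ × ℕ // x ∈ D})
    (hσR : ∀ b, (σ b).val.1 = b.val.1)
    (hσRA : ¬ ∀ b, (φ (σ b)).val.1 = (φ b).val.1) :
    Csum (fun b : {x : ℕ × ℕ // x ∈ D} => b.val.2) * MonoidAlgebra.single σ (1 : ℂ) *
      Rsum (fun b : {x : ℕ × ℕ // x ∈ D} => (φ b).val.1) = 0 := by
  set moved := fun b : {x : ℕ × ℕ // x ∈ D} => b.val.1 = i1 ∧ (i2, b.val.2) ∉ D
  have hrowA : ∀ b, (φ b).val.1 = if moved b then i2 else b.val.1 := fun b => by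
    rw [hφ b]; split_ifs <;> rfl
  obtain ⟨b, hb, hσb⟩ : ∃ b, moved b ∧ ¬ moved (σ b) := by
    by_contra! hmaps
    have hback := σ.perm_symm_mapsTo_of_mapsTo (s := {b | moved b}) hmaps
    refine hσRA fun b => ?_
    have hiff : moved (σ b) ↔ moved b := ⟨fun h => by simpa using hback h, hmaps b⟩
    simp only [hrowA, hσR, hiff]
  have hv : (i2, (σ b).val.2) ∈ D := by
    by_contra hv
    exact hσb ⟨(hσR b).trans hb.1, hv⟩
  refine Csum_mul_single_mul_Rsum_eq_zero (u := σ b) (v := ⟨_, hv⟩) (fun h => h12 ?_) rfl ?_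
  · simpa [hσR, hb.1] using congrArg (fun x => x.val.1) h
  · have hσv : (σ.symm ⟨_, hv⟩).val.1 = i2 := by
      rw [← hσR (σ.symm _), apply_symm_apply]
    rw [Perm.coe_inv, symm_apply_apply, hrowA, hrowA, if_pos hb,
      if_neg fun h => h12 (hσv ▸ h.1).symm, hσv]

/-- With `D^A` obtained from `D` by moving boxes from row `i1` to row
`i2` where possible and `φ` the canonical column-preserving bijection, for every
`σ ∈ R_D \ R_{D^A}` we have `C(D) · σ · R(D^A) = 0` in `ℂ[Σ_D]`. -/
theorem statement11 (D DA : Dg) (i1 i2 : ℕ) (h12 : i1 ≠ i2)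
    (hDA1 : ∀ p q : ℕ, p ≠ i1 → p ≠ i2 → ((p, q) ∈ DA ↔ (p, q) ∈ D))
    (hDA2 : ∀ q : ℕ, (i1, q) ∈ DA ↔ ((i1, q) ∈ D ∧ (i2, q) ∈ D))
    (hDA3 : ∀ q : ℕ, (i2, q) ∈ DA ↔ ((i1, q) ∈ D ∨ (i2, q) ∈ D))
    (φ : {x : ℕ × ℕ // x ∈ D} ≃ {x : ℕ × ℕ // x ∈ DA})
    (hφ : ∀ b : {x : ℕ × ℕ // x ∈ D},
      (φ b).val = if b.val.1 = i1 ∧ (i2, b.val.2) ∉ D then (i2, b.val.2) else b.val)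
    (σ : Equiv.Perm {x : ℕ × ℕ // x ∈ D})
    (hσR : ∀ b, (σ b).val.1 = b.val.1)
    (hσRA : ¬ ∀ b, (φ (σ b)).val.1 = (φ b).val.1) :
    Csum (fun b : {x : ℕ × ℕ // x ∈ D} => b.val.2) * MonoidAlgebra.single σ (1 : ℂ) *
      Rsum (fun b : {x : ℕ × ℕ // x ∈ D} => (φ b).val.1) = 0 :=
  statement11_general D DA i1 i2 h12 φ hφ σ hσR hσRA
end

section
/- Let D be a diagram, i_1 ≠ i_2 two row indices, and D^A the diagram obtained from D by moving boxes from row i_1 to row i_2 within their columns where possible, with φ the induced column-preserving bijection from the boxes of D to the boxes of D^A and all elements associated to D^A regarded in ℂ[Σ_D] via φ. Let Y be a set of right coset representatives of R_D ∩ R_{D^A} in R_{D^A}. Then right multiplication by Σ_{σ ∈ Y} σ maps the Specht module V^D into V^{D^A}; in particular it defines a homomorphism of left ℂ[Σ_D]-modules T : V^D → V^{D^A}. -/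
/-!
Write `R`, `R'` for the row groups of `D` and `D^A` and `K = R ∩ R'`. Since `Y` is a transversal,
`R(K)·ΣY = R(D^A)`, while `R(D)·R(K) = |K|·R(D)`; hence
`|K|·C(D) R(D) ΣY = C(D) R(D) R(D^A) = Σ_{ρ ∈ R} C(D) ρ R(D^A)`.
A term with `ρ ∉ R'` vanishes: `ρ` sends a box `m` that moves to row `i₂` onto a box `a` that
stays in row `i₁`, so `a` has a box `y` of row `i₂` in its column, and the column transposition
`t = (a y)` satisfies `ρ⁻¹ t ρ = (m ρ⁻¹y) ∈ R'`, whence `C ρ R(D^A) = C t ρ R(D^A) = -C ρ R(D^A)`.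
The `|K|` terms with `ρ ∈ K` all equal `C(D) R(D^A)`, and `C(D^A) = C(D)` as `φ` preserves columns.
-/

open MonoidAlgebra Finset

section SubgroupSum

variable {G : Type*} [Group G] [Fintype G]

open scoped Classical in
noncomputable def subgroupSum (H : Subgroup G) : MonoidAlgebra ℂ G :=
  ∑ g ∈ univ.filter (· ∈ H), single g 1

theorem single_mul_subgroupSum {H : Subgroup G} {g : G} (hg : g ∈ H) :
    single g 1 * subgroupSum H = subgroupSum H := by
  rw [subgroupSum, mul_sum]
  refine sum_equiv (Equiv.mulLeft g) (fun x => ?_) fun x _ => ?_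
  · simp [H.mul_mem_cancel_left hg]
  · rw [single_mul_single, one_mul, Equiv.coe_mulLeft]

theorem subgroupSum_mul_single {H : Subgroup G} {g : G} (hg : g ∈ H) :
    subgroupSum H * single g 1 = subgroupSum H := by
  rw [subgroupSum, sum_mul]
  refine sum_equiv (Equiv.mulRight g) (fun x => ?_) fun x _ => ?_
  · simp [H.mul_mem_cancel_right hg]
  · rw [single_mul_single, one_mul, Equiv.coe_mulRight]

theorem subgroupSum_mul_subgroupSum_of_le {H K : Subgroup G} (hKH : K ≤ H) :
    subgroupSum H * subgroupSum K = (Nat.card K : ℂ) • subgroupSum H := by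
  classical
  rw [subgroupSum.eq_1 K, mul_sum,
    sum_congr rfl fun k hk => subgroupSum_mul_single (hKH (mem_filter.1 hk).2), sum_const,
    Nat.cast_smul_eq_nsmul, Nat.card_eq_fintype_card, Fintype.card_subtype]

theorem subgroupSum_mul_sum_eq_of_existsUnique {H K : Subgroup G} (hKH : K ≤ H) {Y : Finset G}
    (hYH : ∀ σ ∈ Y, σ ∈ H) (hY : ∀ τ ∈ H, ∃! σ, σ ∈ Y ∧ τ * σ⁻¹ ∈ K) :
    subgroupSum K * ∑ σ ∈ Y, single σ 1 = subgroupSum H := by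
  classical
  rw [subgroupSum, subgroupSum, sum_mul_sum, ← sum_product']
  refine sum_bij (fun p _ => p.1 * p.2) (fun p hp => ?_) (fun p hp q hq hpq => ?_)
    (fun τ hτ => ?_) (fun p _ => by rw [single_mul_single, one_mul])
  · simp only [mem_product, mem_filter, mem_univ, true_and] at hp ⊢
    exact H.mul_mem (hKH hp.1) (hYH _ hp.2)
  · simp only [mem_product, mem_filter, mem_univ, true_and] at hp hq hpq
    obtain ⟨σ, -, hσ⟩ := hY _ (H.mul_mem (hKH hq.1) (hYH _ hq.2))
    have hp2 : p.2 = σ := hσ _ ⟨hp.2, by rw [hpq.symm, mul_inv_cancel_right]; exact hp.1⟩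
    have hq2 : q.2 = σ := hσ _ ⟨hq.2, by rw [mul_inv_cancel_right]; exact hq.1⟩
    rw [hp2, hq2] at hpq
    exact Prod.ext (mul_right_cancel hpq) (hp2.trans hq2.symm)
  · simp only [mem_filter, mem_univ, true_and] at hτ
    obtain ⟨σ, ⟨hσY, hσK⟩, -⟩ := hY τ hτ
    exact ⟨(τ * σ⁻¹, σ), by simp [hσY, hσK], inv_mul_cancel_right τ σ⟩

theorem mul_single_mul_subgroupSum_eq_zero {H : Subgroup G} {C : MonoidAlgebra ℂ G} {t ρ : G}
    (hC : C * single t 1 = -C) (hρ : ρ⁻¹ * t * ρ ∈ H) :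
    C * single ρ 1 * subgroupSum H = 0 := by
  have hconj : single ρ (1 : ℂ) * single (ρ⁻¹ * t * ρ) 1 = single t 1 * single ρ 1 := by
    rw [single_mul_single, single_mul_single]
    group
  have h : C * single ρ 1 * subgroupSum H = -(C * single ρ 1 * subgroupSum H) := calc
    C * single ρ 1 * subgroupSum H
        = C * (single ρ 1 * single (ρ⁻¹ * t * ρ) 1) * subgroupSum H := by
          rw [mul_assoc C, mul_assoc C, mul_assoc, single_mul_subgroupSum hρ]
    _ = -(C * single ρ 1 * subgroupSum H) := by rw [hconj, ← mul_assoc, hC, neg_mul, neg_mul]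
  have h2 : (2 : ℂ) • (C * single ρ 1 * subgroupSum H) = 0 := by
    rw [two_smul]
    nth_rewrite 2 [h]
    exact add_neg_cancel _
  exact (smul_eq_zero.mp h2).resolve_left two_ne_zero

theorem mul_subgroupSum_mul_sum_eq {R R' : Subgroup G} {Y : Finset G} {C : MonoidAlgebra ℂ G}
    (hYR' : ∀ σ ∈ Y, σ ∈ R') (hY : ∀ τ ∈ R', ∃! σ, σ ∈ Y ∧ τ * σ⁻¹ ∈ R ⊓ R')
    (hC : ∀ ρ ∈ R, ρ ∉ R' → C * single ρ 1 * subgroupSum R' = 0) :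
    C * subgroupSum R * ∑ σ ∈ Y, single σ 1 = C * subgroupSum R' := by
  classical
  have hK : (Nat.card (R ⊓ R' : Subgroup G) : ℂ) ≠ 0 := Nat.cast_ne_zero.mpr Nat.card_pos.ne'
  have hexpand : C * subgroupSum R * subgroupSum R' =
      (Nat.card (R ⊓ R' : Subgroup G) : ℂ) • (C * subgroupSum R') := calc
    C * subgroupSum R * subgroupSum R'
        = ∑ ρ ∈ univ.filter (· ∈ R), C * single ρ 1 * subgroupSum R' := by
          rw [subgroupSum.eq_1 R, mul_sum, sum_mul]
    _ = ∑ ρ ∈ univ.filter (· ∈ R ⊓ R'), C * subgroupSum R' := by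
          rw [← sum_filter_add_sum_filter_not _ (· ∈ R'), filter_filter, add_eq_left.mpr]
          · refine sum_congr (by ext; simp) fun ρ hρ => ?_
            rw [mul_assoc, single_mul_subgroupSum (mem_filter.mp hρ).2.2]
          · refine sum_eq_zero fun ρ hρ => ?_
            simp only [mem_filter, mem_univ, true_and] at hρ
            exact hC ρ hρ.1 hρ.2
    _ = (Nat.card (R ⊓ R' : Subgroup G) : ℂ) • (C * subgroupSum R') := by
          rw [sum_const, Nat.cast_smul_eq_nsmul, Nat.card_eq_fintype_card, Fintype.card_subtype]
  refine smul_right_injective _ hK ?_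
  dsimp only
  rw [← hexpand, ← subgroupSum_mul_sum_eq_of_existsUnique inf_le_right hYR' hY, ← mul_assoc,
    mul_assoc C (subgroupSum R) (subgroupSum (R ⊓ R')),
    subgroupSum_mul_subgroupSum_of_le inf_le_left, mul_smul_comm, smul_mul_assoc]

end SubgroupSum

section MovedRow

open Equiv

variable {α : Type*}

def fiberPerm {β : Type*} (f : α → β) : Subgroup (Perm α) where
  carrier := {σ | ∀ b, f (σ b) = f b}
  mul_mem' {σ τ} hσ hτ b := (hσ (τ b)).trans (hτ b)
  one_mem' _ := rfl
  inv_mem' {σ} hσ b := by simpa using (hσ (σ⁻¹ b)).symm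

@[simp]
theorem mem_fiberPerm {β : Type*} {f : α → β} {σ : Perm α} :
    σ ∈ fiberPerm f ↔ ∀ b, f (σ b) = f b :=
  Iff.rfl

theorem swap_mem_fiberPerm [DecidableEq α] {β : Type*} {f : α → β} {x y : α} (h : f x = f y) :
    swap x y ∈ fiberPerm f := fun b => by
  rcases eq_or_ne b x with rfl | hbx
  · rw [swap_apply_left, h]
  rcases eq_or_ne b y with rfl | hby
  · rw [swap_apply_right, h]
  · rw [swap_apply_of_ne_of_ne hbx hby]

variable (r c : α → ℕ) (i1 i2 : ℕ)

-- The row, in `D^A`, of the image under `φ` of a box of `D`.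
open scoped Classical in
noncomputable def movedRow (b : α) : ℕ :=
  if r b = i1 ∧ ¬∃ y, r y = i2 ∧ c y = c b then i2 else r b

variable {r c i1 i2}

theorem movedRow_eq_or (b : α) : movedRow r c i1 i2 b = i2 ∨ movedRow r c i1 i2 b = r b := by
  unfold movedRow
  split_ifs <;> simp

theorem movedRow_of_row_eq {b : α} (h : r b = i2) : movedRow r c i1 i2 b = i2 :=
  (movedRow_eq_or b).elim id (·.trans h)

theorem row_of_movedRow_eq {b : α} (h : movedRow r c i1 i2 b = i2) : r b = i1 ∨ r b = i2 := by
  unfold movedRow at h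
  split_ifs at h with hb
  exacts [Or.inl hb.1, Or.inr h]

theorem exists_row_eq_of_movedRow_eq (h12 : i1 ≠ i2) {a : α} (h : movedRow r c i1 i2 a = i1) :
    r a = i1 ∧ ∃ y, r y = i2 ∧ c y = c a := by
  unfold movedRow at h
  split_ifs at h with ha
  · exact absurd h.symm h12
  · exact ⟨h, by simpa [h] using ha⟩

theorem exists_movedRow_eq_and_ne [Finite α] {ρ : Perm α} (hρ : ρ ∈ fiberPerm r)
    (hρ' : ρ ∉ fiberPerm (movedRow r c i1 i2)) :
    ∃ m, movedRow r c i1 i2 m = i2 ∧ movedRow r c i1 i2 (ρ m) ≠ i2 := by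
  by_contra! hQ
  refine hρ' fun b => ?_
  by_cases hb : movedRow r c i1 i2 b = i2
  · rw [hQ b hb, hb]
  · have hρb : movedRow r c i1 i2 (ρ b) ≠ i2 := fun hρb => hb <| by
      simpa using Perm.perm_symm_on_of_perm_on_finite hQ hρb
    rw [(movedRow_eq_or _).resolve_left hρb, (movedRow_eq_or _).resolve_left hb, hρ b]

theorem exists_swap_conj_mem_fiberPerm_movedRow [Finite α] [DecidableEq α] (h12 : i1 ≠ i2)
    {ρ : Perm α} (hρ : ρ ∈ fiberPerm r) (hρ' : ρ ∉ fiberPerm (movedRow r c i1 i2)) :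
    ∃ a y, a ≠ y ∧ c a = c y ∧ ρ⁻¹ * swap a y * ρ ∈ fiberPerm (movedRow r c i1 i2) := by
  obtain ⟨m, hm, hρm⟩ := exists_movedRow_eq_and_ne hρ hρ'
  have hra : r (ρ m) = i1 := by
    rw [hρ m]
    refine (row_of_movedRow_eq hm).resolve_right fun hrm => hρm ?_
    exact movedRow_of_row_eq ((hρ m).trans hrm)
  have ha : movedRow r c i1 i2 (ρ m) = i1 := ((movedRow_eq_or _).resolve_left hρm).trans hra
  obtain ⟨y, hy, hcy⟩ := (exists_row_eq_of_movedRow_eq h12 ha).2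
  refine ⟨ρ m, y, fun h => h12 (by rw [← hra, h, hy]), hcy.symm, ?_⟩
  have hconj : ρ⁻¹ * swap (ρ m) y * ρ = swap m (ρ⁻¹ y) := by
    simpa using (swap_apply_apply ρ⁻¹ (ρ m) y).symm
  rw [hconj]
  refine swap_mem_fiberPerm (hm.trans (movedRow_of_row_eq ?_).symm)
  rw [(fiberPerm r).inv_mem hρ y, hy]

end MovedRow

section Specht

open Equiv

variable {α : Type} [Fintype α] [DecidableEq α]

theorem rsum_eq_subgroupSum (f : α → ℕ) : Rsum f = subgroupSum (fiberPerm f) := by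
  rw [Rsum, subgroupSum]
  congr

theorem csum_mul_swap {f : α → ℕ} {x y : α} (hxy : x ≠ y) (h : f x = f y) :
    Csum f * single (swap x y) (1 : ℂ) = -Csum f := by
  rw [Csum, sum_mul, ← sum_neg_distrib]
  refine sum_equiv (Equiv.mulRight (swap x y)) (fun σ => ?_) fun σ _ => ?_
  · simpa using (fiberPerm f).mul_mem_cancel_right (swap_mem_fiberPerm h) |>.symm
  · rw [single_mul_single, Equiv.coe_mulRight, ← single_neg, Perm.sign_mul, Perm.sign_swap hxy]
    push_cast
    ring_nf

theorem csum_mul_rsum_mul_sum_eq {r c : α → ℕ} {i1 i2 : ℕ} (h12 : i1 ≠ i2)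
    {Y : Finset (Perm α)} (hYR' : ∀ σ ∈ Y, σ ∈ fiberPerm (movedRow r c i1 i2))
    (hY : ∀ τ ∈ fiberPerm (movedRow r c i1 i2),
      ∃! σ, σ ∈ Y ∧ τ * σ⁻¹ ∈ fiberPerm r ⊓ fiberPerm (movedRow r c i1 i2)) :
    Csum c * Rsum r * ∑ σ ∈ Y, single σ 1 = Csum c * Rsum (movedRow r c i1 i2) := by
  rw [rsum_eq_subgroupSum, rsum_eq_subgroupSum]
  refine mul_subgroupSum_mul_sum_eq hYR' hY fun ρ hρ hρ' => ?_
  obtain ⟨a, y, hay, hc, hconj⟩ := exists_swap_conj_mem_fiberPerm_movedRow h12 hρ hρ'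
  exact mul_single_mul_subgroupSum_eq_zero (csum_mul_swap hay hc) hconj

end Specht

theorem statement13_general (D DA : Dg) (i1 i2 : ℕ) (h12 : i1 ≠ i2)
    (φ : {x : ℕ × ℕ // x ∈ D} ≃ {x : ℕ × ℕ // x ∈ DA})
    (hφ : ∀ b : {x : ℕ × ℕ // x ∈ D},
      (φ b).val = if b.val.1 = i1 ∧ (i2, b.val.2) ∉ D then (i2, b.val.2) else b.val)
    (Y : Finset (Equiv.Perm {x : ℕ × ℕ // x ∈ D}))
    (hY1 : ∀ σ ∈ Y, ∀ b, (φ (σ b)).val.1 = (φ b).val.1)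
    (hY2 : ∀ τ : Equiv.Perm {x : ℕ × ℕ // x ∈ D}, (∀ b, (φ (τ b)).val.1 = (φ b).val.1) →
      ∃! σ, σ ∈ Y ∧ (∀ b, ((τ * σ⁻¹) b).val.1 = b.val.1) ∧
        (∀ b, (φ ((τ * σ⁻¹) b)).val.1 = (φ b).val.1))
    :
    (∀ v ∈ Submodule.span (MonoidAlgebra ℂ (Equiv.Perm {x : ℕ × ℕ // x ∈ D}))
        {Csum (fun b : {x : ℕ × ℕ // x ∈ D} => b.val.2) *
          Rsum (fun b : {x : ℕ × ℕ // x ∈ D} => b.val.1)},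
      v * (∑ σ ∈ Y, MonoidAlgebra.single σ (1 : ℂ)) ∈
        Submodule.span (MonoidAlgebra ℂ (Equiv.Perm {x : ℕ × ℕ // x ∈ D}))
          {Csum (fun b : {x : ℕ × ℕ // x ∈ D} => (φ b).val.2) *
            Rsum (fun b : {x : ℕ × ℕ // x ∈ D} => (φ b).val.1)}) ∧
    (∀ (c v : MonoidAlgebra ℂ (Equiv.Perm {x : ℕ × ℕ // x ∈ D})),
      (c * v) * (∑ σ ∈ Y, MonoidAlgebra.single σ (1 : ℂ)) =
        c * (v * (∑ σ ∈ Y, MonoidAlgebra.single σ (1 : ℂ)))) := by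
  have hcol : (fun b : {x // x ∈ D} => (φ b).val.2) = fun b => b.val.2 := by
    funext b
    rw [hφ]
    split_ifs <;> rfl
  have hrow : ∀ b : {x // x ∈ D},
      (φ b).val.1 = movedRow (fun b => b.val.1) (fun b => b.val.2) i1 i2 b := by
    intro b
    simp [hφ, movedRow, apply_ite Prod.fst]
  have key := csum_mul_rsum_mul_sum_eq h12 (by simpa only [mem_fiberPerm, hrow] using hY1)
    (by simpa only [mem_fiberPerm, Subgroup.mem_inf, hrow] using hY2)
  refine ⟨fun v hv => ?_, fun c v => mul_assoc c v _⟩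
  obtain ⟨x, rfl⟩ := Submodule.mem_span_singleton.mp hv
  refine Submodule.mem_span_singleton.mpr ⟨x, ?_⟩
  rw [hcol, funext hrow, smul_eq_mul, smul_eq_mul, mul_assoc, mul_assoc, ← mul_assoc (Csum _), key]

/-- With `D^A`, `φ`, and `Y` as above, right multiplication by
`Σ_{σ ∈ Y} σ` maps the Specht module `V^D = ℂ[Σ_D]·C(D)·R(D)` into
`V^{D^A} = ℂ[Σ_D]·C(D^A)·R(D^A)`, and defines a homomorphism of left
`ℂ[Σ_D]`-modules `T : V^D → V^{D^A}`. -/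
theorem statement13 (D DA : Dg) (i1 i2 : ℕ) (h12 : i1 ≠ i2)
    (hDA1 : ∀ p q : ℕ, p ≠ i1 → p ≠ i2 → ((p, q) ∈ DA ↔ (p, q) ∈ D))
    (hDA2 : ∀ q : ℕ, (i1, q) ∈ DA ↔ ((i1, q) ∈ D ∧ (i2, q) ∈ D))
    (hDA3 : ∀ q : ℕ, (i2, q) ∈ DA ↔ ((i1, q) ∈ D ∨ (i2, q) ∈ D))
    (φ : {x : ℕ × ℕ // x ∈ D} ≃ {x : ℕ × ℕ // x ∈ DA})
    (hφ : ∀ b : {x : ℕ × ℕ // x ∈ D},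
      (φ b).val = if b.val.1 = i1 ∧ (i2, b.val.2) ∉ D then (i2, b.val.2) else b.val)
    (Y : Finset (Equiv.Perm {x : ℕ × ℕ // x ∈ D}))
    (hY1 : ∀ σ ∈ Y, ∀ b, (φ (σ b)).val.1 = (φ b).val.1)
    (hY2 : ∀ τ : Equiv.Perm {x : ℕ × ℕ // x ∈ D}, (∀ b, (φ (τ b)).val.1 = (φ b).val.1) →
      ∃! σ, σ ∈ Y ∧ (∀ b, ((τ * σ⁻¹) b).val.1 = b.val.1) ∧
        (∀ b, (φ ((τ * σ⁻¹) b)).val.1 = (φ b).val.1))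
    :
    (∀ v ∈ Submodule.span (MonoidAlgebra ℂ (Equiv.Perm {x : ℕ × ℕ // x ∈ D}))
        {Csum (fun b : {x : ℕ × ℕ // x ∈ D} => b.val.2) *
          Rsum (fun b : {x : ℕ × ℕ // x ∈ D} => b.val.1)},
      v * (∑ σ ∈ Y, MonoidAlgebra.single σ (1 : ℂ)) ∈
        Submodule.span (MonoidAlgebra ℂ (Equiv.Perm {x : ℕ × ℕ // x ∈ D}))
          {Csum (fun b : {x : ℕ × ℕ // x ∈ D} => (φ b).val.2) *
            Rsum (fun b : {x : ℕ × ℕ // x ∈ D} => (φ b).val.1)}) ∧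
    (∀ (c v : MonoidAlgebra ℂ (Equiv.Perm {x : ℕ × ℕ // x ∈ D})),
      (c * v) * (∑ σ ∈ Y, MonoidAlgebra.single σ (1 : ℂ)) =
        c * (v * (∑ σ ∈ Y, MonoidAlgebra.single σ (1 : ℂ)))) :=
  statement13_general D DA i1 i2 h12 φ hφ Y hY1 hY2
end
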